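/- Let s₊ > 0, let Q ∈ S₀ (the real symmetric traceless 3×3 matrices), and let n ∈ ℝ³ be a unit vector with n ≠ −e₃ which is an eigenvector of Q (i.e. Qn = λn for some λ ∈ ℝ). Then there exists a unique ρ = (ρ₁,ρ₂,ρ₃) ∈ ℝ³ such that Q = s₊(n⊗n − (1/3)I) + R_n (ρ₁F₁ + ρ₂F₂ + ρ₃F₃) R_nᵀ. -/

import Mathlib

open Matrix

/-- Standard basis vectors of `ℝ³`. -/
def e1v : Fin 3 → ℝ := ![1, 0, 0]
def e2v : Fin 3 → ℝ := ![0, 1, 0]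
def e3v : Fin 3 → ℝ := ![0, 0, 1]

/-- `F₁ = (e₁⊗e₁ - e₂⊗e₂)/√2`. -/
noncomputable def F1 : Matrix (Fin 3) (Fin 3) ℝ :=
  (Real.sqrt 2)⁻¹ • (vecMulVec e1v e1v - vecMulVec e2v e2v)

/-- `F₂ = (e₁⊗e₂ + e₂⊗e₁)/√2`. -/
noncomputable def F2 : Matrix (Fin 3) (Fin 3) ℝ :=
  (Real.sqrt 2)⁻¹ • (vecMulVec e1v e2v + vecMulVec e2v e1v)

/-- `F₃ = √(3/2)(e₃⊗e₃ - (1/3)I)`. -/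
noncomputable def F3 : Matrix (Fin 3) (Fin 3) ℝ :=
  Real.sqrt (3 / 2) • (vecMulVec e3v e3v - (3 : ℝ)⁻¹ • (1 : Matrix (Fin 3) (Fin 3) ℝ))

/-- The antisymmetric matrix `[ω]_×` of `ω ∈ ℝ³`, with `[ω]_× v = ω × v`. -/
def skew3 (ω : Fin 3 → ℝ) : Matrix (Fin 3) (Fin 3) ℝ :=
  !![0, -ω 2, ω 1; ω 2, 0, -ω 0; -ω 1, ω 0, 0]

/-- The rotation `R_n = I + [e₃×n]_× + [e₃×n]_×²/(1 + n·e₃)` mapping `e₃` to `n`. -/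
noncomputable def Rrot (n : Fin 3 → ℝ) : Matrix (Fin 3) (Fin 3) ℝ :=
  1 + skew3 (e3v ⨯₃ n) + (1 + n ⬝ᵥ e3v)⁻¹ • (skew3 (e3v ⨯₃ n) * skew3 (e3v ⨯₃ n))

/-!
Conjugation by the rotation `R_n`, which is orthogonal and maps `e₃` to `n`, turns
`Q - s₊(n⊗n - I/3)` into a symmetric traceless matrix having `e₃` as an eigenvector. Such
matrices are exactly the combinations `ρ₁F₁ + ρ₂F₂ + ρ₃F₃`, with unique coefficients.
Writing `R_n = 1 + K + cK²` with `K = [ω]_×`, `ω = e₃ × n`, the identity `K³ = -|ω|²K` reduces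
`R_n R_nᵀ = 1` to `c²|ω|² = 2c - 1`, which holds for `c = 1/(1 + n·e₃)` since `|ω|² = 1 - (n·e₃)²`.
-/

section Conjugation

variable {m α : Type*} [Fintype m] [CommRing α]

theorem Matrix.IsSymm.transpose_mul_mul {X : Matrix m m α} (hX : X.IsSymm) (R : Matrix m m α) :
    (Rᵀ * X * R).IsSymm := by
  simp [IsSymm, transpose_mul, hX.eq, mul_assoc]

variable [DecidableEq m] {R : Matrix m m α}

theorem trace_transpose_mul_mul_of_mul_transpose_eq_one (hR : R * Rᵀ = 1) (X : Matrix m m α) :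
    (Rᵀ * X * R).trace = X.trace := by
  rw [trace_mul_cycle, hR, one_mul]

theorem transpose_mul_mul_mulVec_of_mulVec_eq_smul (hR : Rᵀ * R = 1) {X : Matrix m m α}
    {e v : m → α} {μ : α} (he : R *ᵥ e = v) (hX : X *ᵥ v = μ • v) :
    (Rᵀ * X * R) *ᵥ e = μ • e := by
  have hv : Rᵀ *ᵥ v = e := by rw [← he, mulVec_mulVec, hR, one_mulVec]
  rw [← mulVec_mulVec, ← mulVec_mulVec, he, hX, mulVec_smul, hv]

theorem eq_add_mul_mul_transpose_iff (hR : R * Rᵀ = 1) {Q A C : Matrix m m α} :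
    Q = A + R * C * Rᵀ ↔ C = Rᵀ * (Q - A) * R := by
  have hR' : Rᵀ * R = 1 := mul_eq_one_comm.mp hR
  constructor
  · rintro rfl
    rw [add_sub_cancel_left, ← mul_assoc, ← mul_assoc, hR', one_mul, mul_assoc, hR', mul_one]
  · rintro rfl
    rw [← mul_assoc, ← mul_assoc, hR, one_mul, mul_assoc, hR, mul_one, add_sub_cancel]

end Conjugation

section Uniaxial

noncomputable def uniaxial (s : ℝ) (n : Fin 3 → ℝ) : Matrix (Fin 3) (Fin 3) ℝ :=
  s • (vecMulVec n n - (3 : ℝ)⁻¹ • 1)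

theorem uniaxial_isSymm (s : ℝ) (n : Fin 3 → ℝ) : (uniaxial s n).IsSymm := by
  simp [uniaxial, IsSymm, transpose_vecMulVec]

theorem trace_uniaxial (s : ℝ) {n : Fin 3 → ℝ} (hn : n ⬝ᵥ n = 1) : (uniaxial s n).trace = 0 := by
  simp [uniaxial, hn]

theorem uniaxial_mulVec_self (s : ℝ) {n : Fin 3 → ℝ} (hn : n ⬝ᵥ n = 1) :
    uniaxial s n *ᵥ n = (2 / 3 * s) • n := by
  have hnn : vecMulVec n n *ᵥ n = n := by rw [vecMulVec_mulVec, hn, MulOpposite.op_one, one_smul]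
  rw [uniaxial, smul_mulVec, sub_mulVec, hnn, smul_mulVec, one_mulVec]
  module

end Uniaxial

section Rotation

theorem skew3_transpose (ω : Fin 3 → ℝ) : (skew3 ω)ᵀ = -skew3 ω := by
  ext i j
  fin_cases i <;> fin_cases j <;> simp [skew3]

theorem skew3_mulVec (ω v : Fin 3 → ℝ) : skew3 ω *ᵥ v = ω ⨯₃ v := by
  ext i
  fin_cases i <;> simp [skew3, cross_apply, mulVec, vecHead, vecTail] <;> ring

theorem skew3_mul_skew3_mul_skew3 (ω : Fin 3 → ℝ) :
    skew3 ω * skew3 ω * skew3 ω = -(ω ⬝ᵥ ω) • skew3 ω := by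
  ext i j
  fin_cases i <;> fin_cases j <;>
    simp [skew3, mul_apply, Fin.sum_univ_three, vec3_dotProduct] <;> ring

theorem one_add_skew3_add_smul_mul_transpose (ω : Fin 3 → ℝ) {c : ℝ}
    (hc : c ^ 2 * (ω ⬝ᵥ ω) = 2 * c - 1) :
    (1 + skew3 ω + c • (skew3 ω * skew3 ω)) * (1 + skew3 ω + c • (skew3 ω * skew3 ω))ᵀ = 1 := by
  have hK3 := skew3_mul_skew3_mul_skew3 ω
  set K := skew3 ω
  have hKt : (1 + K + c • (K * K))ᵀ = 1 - K + c • (K * K) := by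
    simp [K, transpose_mul, skew3_transpose, sub_eq_add_neg]
  rw [hKt]
  calc (1 + K + c • (K * K)) * (1 - K + c • (K * K))
      = 1 + (2 * c - 1 - c ^ 2 * (ω ⬝ᵥ ω)) • (K * K) := by
        simp only [add_mul, mul_add, mul_sub, smul_mul_assoc, mul_smul_comm, mul_one, one_mul,
          ← mul_assoc, hK3]
        module
    _ = 1 := by rw [hc, sub_self, zero_smul, add_zero]

theorem e3v_dotProduct_self : e3v ⬝ᵥ e3v = 1 := by
  simp [e3v]

variable {n : Fin 3 → ℝ}

theorem one_add_dotProduct_e3v_ne_zero (hn : n ⬝ᵥ n = 1) (hne : n ≠ -e3v) :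
    1 + n ⬝ᵥ e3v ≠ 0 := by
  intro h
  refine hne (eq_neg_of_add_eq_zero_left (dotProduct_self_eq_zero.mp ?_))
  rw [add_dotProduct, dotProduct_add, dotProduct_add, dotProduct_comm e3v n, hn, e3v_dotProduct_self]
  linear_combination 2 * h

theorem cross_e3v_dotProduct_self (hn : n ⬝ᵥ n = 1) :
    (e3v ⨯₃ n) ⬝ᵥ (e3v ⨯₃ n) = (1 - n ⬝ᵥ e3v) * (1 + n ⬝ᵥ e3v) := by
  rw [cross_dot_cross, e3v_dotProduct_self, hn, dotProduct_comm e3v n]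
  ring

theorem Rrot_mul_transpose (hn : n ⬝ᵥ n = 1) (hne : n ≠ -e3v) :
    Rrot n * (Rrot n)ᵀ = 1 := by
  have ht := one_add_dotProduct_e3v_ne_zero hn hne
  refine one_add_skew3_add_smul_mul_transpose _ ?_
  rw [cross_e3v_dotProduct_self hn]
  field_simp
  ring

theorem Rrot_mulVec_e3v (hn : n ⬝ᵥ n = 1) (hne : n ≠ -e3v) :
    Rrot n *ᵥ e3v = n := by
  have ht := one_add_dotProduct_e3v_ne_zero hn hne
  have hωe : (e3v ⨯₃ n) ⨯₃ e3v = n - (n ⬝ᵥ e3v) • e3v := by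
    rw [cross_cross_eq_smul_sub_smul, e3v_dotProduct_self, one_smul]
  have hωωe :
      (e3v ⨯₃ n) ⨯₃ ((e3v ⨯₃ n) ⨯₃ e3v) = -((1 - n ⬝ᵥ e3v) * (1 + n ⬝ᵥ e3v)) • e3v := by
    rw [cross_cross_eq_smul_sub_smul', dotProduct_comm, dot_self_cross, zero_smul, zero_sub,
      cross_e3v_dotProduct_self hn, neg_smul]
  have hc : (1 + n ⬝ᵥ e3v)⁻¹ * -((1 - n ⬝ᵥ e3v) * (1 + n ⬝ᵥ e3v)) = n ⬝ᵥ e3v - 1 := by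
    field_simp
    ring
  rw [Rrot, add_mulVec, add_mulVec, one_mulVec, smul_mulVec, ← mulVec_mulVec, skew3_mulVec,
    skew3_mulVec, hωωe, hωe, smul_smul, hc]
  module

end Rotation

section Combination

theorem F_combination_eq (ρ : Fin 3 → ℝ) :
    ρ 0 • F1 + ρ 1 • F2 + ρ 2 • F3 =
      !![ρ 0 / √2 - √(3 / 2) / 3 * ρ 2, ρ 1 / √2, 0;
         ρ 1 / √2, -ρ 0 / √2 - √(3 / 2) / 3 * ρ 2, 0;
         0, 0, 2 * √(3 / 2) / 3 * ρ 2] := by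
  ext i j
  fin_cases i <;> fin_cases j <;>
    simp [F1, F2, F3, e1v, e2v, e3v, vecMulVec, one_apply, vecHead, vecTail] <;> ring

theorem F_combination_injective :
    Function.Injective fun ρ : Fin 3 → ℝ => ρ 0 • F1 + ρ 1 • F2 + ρ 2 • F3 := by
  intro ρ ρ' h
  have ha : √2 ≠ 0 := by positivity
  have hb : √(3 / 2) ≠ 0 := by positivity
  simp only [F_combination_eq] at h
  have h00 := congrFun (congrFun h 0) 0
  have h01 := congrFun (congrFun h 0) 1
  have h22 := congrFun (congrFun h 2) 2
  simp only [of_apply, cons_val', cons_val_zero, cons_val_one, cons_val_two, empty_val',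
    cons_val_fin_one, div_left_inj' ha] at h00 h01 h22
  have h2 : ρ 2 = ρ' 2 := mul_left_cancel₀ (by positivity) h22
  rw [h2, sub_left_inj, div_left_inj' ha] at h00
  ext i
  fin_cases i
  exacts [h00, h01, h2]

theorem exists_F_combination_eq {M : Matrix (Fin 3) (Fin 3) ℝ} (hM : M.IsSymm)
    (htr : M.trace = 0) (he : ∃ μ : ℝ, M *ᵥ e3v = μ • e3v) :
    ∃ ρ : Fin 3 → ℝ, ρ 0 • F1 + ρ 1 • F2 + ρ 2 • F3 = M := by
  obtain ⟨μ, hμ⟩ := he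
  have h02 : M 0 2 = 0 := by
    simpa [mulVec, vec3_dotProduct, e3v, vecHead, vecTail] using congrFun hμ 0
  have h12 : M 1 2 = 0 := by
    simpa [mulVec, vec3_dotProduct, e3v, vecHead, vecTail] using congrFun hμ 1
  have htr' : M 0 0 + M 1 1 + M 2 2 = 0 := by rwa [trace_fin_three] at htr
  have ha : √2 ^ 2 = 2 := Real.sq_sqrt (by norm_num)
  have hb : √(3 / 2) ^ 2 = 3 / 2 := Real.sq_sqrt (by norm_num)
  have ha0 : √2 ≠ 0 := by positivity
  refine ⟨![(M 0 0 - M 1 1) / √2, √2 * M 0 1, √(3 / 2) * M 2 2], ?_⟩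
  rw [F_combination_eq]
  set a := √2
  set b := √(3 / 2)
  ext i j
  fin_cases i <;> fin_cases j <;>
    simp [h02, h12, hM.apply 0 1, (hM.apply 0 2).trans h02, (hM.apply 1 2).trans h12] <;>
    field_simp <;> simp only [ha, hb] <;> linarith

end Combination

theorem Qtensor_decomposition_general
    (splus : ℝ)
    (Q : Matrix (Fin 3) (Fin 3) ℝ) (hsymm : Q.IsSymm) (htr : Q.trace = 0)
    (n : Fin 3 → ℝ) (hn : n ⬝ᵥ n = 1) (hne : n ≠ -e3v)
    (heig : ∃ lam : ℝ, Q.mulVec n = lam • n) :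
    ∃! ρ : Fin 3 → ℝ,
      Q = splus • (vecMulVec n n - (3 : ℝ)⁻¹ • (1 : Matrix (Fin 3) (Fin 3) ℝ))
        + Rrot n * (ρ 0 • F1 + ρ 1 • F2 + ρ 2 • F3) * (Rrot n)ᵀ := by
  obtain ⟨lam, hlam⟩ := heig
  have hR : Rrot n * (Rrot n)ᵀ = 1 := Rrot_mul_transpose hn hne
  set M := (Rrot n)ᵀ * (Q - uniaxial splus n) * Rrot n
  have hM_symm : M.IsSymm := (hsymm.sub (uniaxial_isSymm splus n)).transpose_mul_mul _
  have hM_trace : M.trace = 0 := by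
    rw [trace_transpose_mul_mul_of_mul_transpose_eq_one hR, trace_sub, htr,
      trace_uniaxial splus hn, sub_zero]
  have hM_e3v : M *ᵥ e3v = (lam - 2 / 3 * splus) • e3v := by
    refine transpose_mul_mul_mulVec_of_mulVec_eq_smul (mul_eq_one_comm.mp hR)
      (Rrot_mulVec_e3v hn hne) ?_
    rw [sub_mulVec, hlam, uniaxial_mulVec_self splus hn, sub_smul]
  obtain ⟨ρ, hρ⟩ := exists_F_combination_eq hM_symm hM_trace ⟨_, hM_e3v⟩
  refine ⟨ρ, (eq_add_mul_mul_transpose_iff hR).mpr hρ, fun ρ' hρ' => ?_⟩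
  exact F_combination_injective (((eq_add_mul_mul_transpose_iff hR).mp hρ').trans hρ.symm)

/-- Any symmetric traceless 3×3 matrix `Q` having a unit eigenvector `n ≠ -e₃` decomposes
uniquely as `Q = s₊(n⊗n - (1/3)I) + R_n (ρ₁F₁ + ρ₂F₂ + ρ₃F₃) R_nᵀ`. -/
theorem Qtensor_decomposition
    (splus : ℝ) (hs : 0 < splus)
    (Q : Matrix (Fin 3) (Fin 3) ℝ) (hsymm : Q.IsSymm) (htr : Q.trace = 0)
    (n : Fin 3 → ℝ) (hn : n ⬝ᵥ n = 1) (hne : n ≠ -e3v)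
    (heig : ∃ lam : ℝ, Q.mulVec n = lam • n) :
    ∃! ρ : Fin 3 → ℝ,
      Q = splus • (vecMulVec n n - (3 : ℝ)⁻¹ • (1 : Matrix (Fin 3) (Fin 3) ℝ))
        + Rrot n * (ρ 0 • F1 + ρ 1 • F2 + ρ 2 • F3) * (Rrot n)ᵀ :=
  Qtensor_decomposition_general splus Q hsymm htr n hn hne heig
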